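/- arXiv:2209.00645 — 3 statements merged into one kernel-verified Lean document; each statement's English description precedes it below -/
import Mathlib

section
/- Let (X, d, m) be a uniformly locally doubling metric measure space, f ∈ BV_loc(X), and G_f = {(x,t) ∈ X × ℝ : t < f(x)} its subgraph in the product metric measure space (X × ℝ, d × d_e, m ⊗ L^1). If (x,t) belongs to the essential boundary ∂*G_f, then f^∧(x) ≤ t ≤ f^∨(x), where f^∧, f^∨ are the approximate lower and upper limits of f. -/
open MeasureTheory Metric Filter
open scoped ENNReal NNReal

/-- The (upper) pointwise Lipschitz slope `lip f (x)`. -/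
noncomputable def lipSlope {X : Type*} [MetricSpace X] (f : X → ℝ) (x : X) : ℝ≥0∞ :=
  Filter.limsup (fun y => ENNReal.ofReal (|f x - f y| / dist x y)) (nhdsWithin x {x}ᶜ)

/-- The relaxed total variation `|Df|(Ω)`: the infimum, over sequences of locally Lipschitz
functions on `Ω` converging to `f` in `L¹_loc(Ω)`, of the liminf of `∫_Ω lip fᵢ dμ`. -/
noncomputable def relaxedTV {X : Type*} [MetricSpace X] [MeasurableSpace X]
    (μ : Measure X) (f : X → ℝ) (Ω : Set X) : ℝ≥0∞ :=
  ⨅ (F : ℕ → X → ℝ)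
    (_ : (∀ i, ∀ x ∈ Ω, ∃ s ∈ nhdsWithin x Ω, ∃ C : ℝ≥0, LipschitzOnWith C (F i) s) ∧
      ∀ K : Set X, IsCompact K → K ⊆ Ω →
        Tendsto (fun i => ∫⁻ x in K, ENNReal.ofReal |F i x - f x| ∂μ) atTop (nhds 0)),
    Filter.liminf (fun i => ∫⁻ x in Ω, lipSlope (F i) x ∂μ) atTop

/-- `f` has locally bounded variation on the metric measure space `(X, d, μ)`. -/
def BVlocM {X : Type*} [MetricSpace X] [MeasurableSpace X]
    (μ : Measure X) (f : X → ℝ) : Prop :=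
  LocallyIntegrable f μ ∧
    ∀ Ω : Set X, IsOpen Ω → Bornology.IsBounded Ω → relaxedTV μ f Ω < ⊤
/-- The approximate lower limit `f^∧(x)` of `f` at `x`. -/
noncomputable def apLower {X : Type*} [MetricSpace X] [MeasurableSpace X]
    (μ : Measure X) (f : X → ℝ) (x : X) : EReal :=
  sSup {t : EReal | Tendsto (fun r => μ (ball x r ∩ {y | (f y : EReal) < t}) / μ (ball x r))
    (nhdsWithin (0 : ℝ) (Set.Ioi 0)) (nhds 0)}

/-- The approximate upper limit `f^∨(x)` of `f` at `x`. -/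
noncomputable def apUpper {X : Type*} [MetricSpace X] [MeasurableSpace X]
    (μ : Measure X) (f : X → ℝ) (x : X) : EReal :=
  sInf {t : EReal | Tendsto (fun r => μ (ball x r ∩ {y | (t : EReal) < f y}) / μ (ball x r))
    (nhdsWithin (0 : ℝ) (Set.Ioi 0)) (nhds 0)}

/-- The approximate jump set of `f`. -/
def jumpSet {X : Type*} [MetricSpace X] [MeasurableSpace X]
    (μ : Measure X) (f : X → ℝ) : Set X :=
  {x | apLower μ f x < apUpper μ f x}

/-- The precise representative `f̄ = (f^∧ + f^∨)/2` of `f` (with junk value conventions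
at points where an approximate limit is infinite). -/
noncomputable def preciseRep {X : Type*} [MetricSpace X] [MeasurableSpace X]
    (μ : Measure X) (f : X → ℝ) (x : X) : ℝ :=
  ((apLower μ f x).toReal + (apUpper μ f x).toReal) / 2

/-- The essential boundary of `E`: the set of points where neither `E` nor its
complement has upper density zero. -/
def essBoundary {X : Type*} [MetricSpace X] [MeasurableSpace X]
    (μ : Measure X) (E : Set X) : Set X :=
  {x | 0 < Filter.limsup (fun r => μ (ball x r ∩ E) / μ (ball x r))
          (nhdsWithin (0 : ℝ) (Set.Ioi 0)) ∧
       0 < Filter.limsup (fun r => μ (ball x r \ E) / μ (ball x r))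
          (nhdsWithin (0 : ℝ) (Set.Ioi 0))}
/-- Uniformly locally doubling measure. -/
def UnifLocDoubling {X : Type*} [MetricSpace X] [MeasurableSpace X] (μ : MeasureTheory.Measure X) : Prop :=
  ∀ R : ℝ, 0 < R → ∃ C : ℝ≥0, ∀ (x : X) (r : ℝ), 0 < r → r < R →
    μ (Metric.ball x (2 * r)) ≤ C * μ (Metric.ball x r)


/-- Let `(X, d, μ)` be uniformly locally doubling and `f ∈ BV_loc(X)`.
If `(x,t)` belongs to the essential boundary of the subgraph `G_f ⊆ X × ℝ`
(with the product metric and measure `μ ⊗ L¹`), then `f^∧(x) ≤ t ≤ f^∨(x)`. -/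
theorem stmt8 {X : Type*} [MetricSpace X] [MeasurableSpace X] [BorelSpace X]
    (μ : Measure X) [SigmaFinite μ] (hμ : UnifLocDoubling μ)
    (f : X → ℝ) (hf : BVlocM μ f) (x : X) (t : ℝ)
    (h : (x, t) ∈ essBoundary (μ.prod volume) {p : X × ℝ | p.2 < f p.1}) :
    apLower μ f x ≤ (t : EReal) ∧ (t : EReal) ≤ apUpper μ f x := by

  constructor
  · by_contra hlt
    push_neg at hlt
    obtain ⟨s, hsmem, hts⟩ := lt_sSup_iff.mp hlt
    obtain ⟨s', hts', hs's⟩ := EReal.exists_between_coe_real hts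
    have hts'' : t < s' := by exact_mod_cast hts'
    have hev : ∀ᶠ r in nhdsWithin (0:ℝ) (Set.Ioi 0),
        (μ.prod volume) (ball (x,t) r \ {p : X × ℝ | p.2 < f p.1}) / (μ.prod volume) (ball (x,t) r)
          ≤ μ (ball x r ∩ {y | (f y : EReal) < s}) / μ (ball x r) := by
      filter_upwards [Ioo_mem_nhdsGT_of_mem (Set.mem_Ico.mpr ⟨le_refl (0:ℝ), sub_pos.mpr hts''⟩)]
        with r hr
      obtain ⟨hr0, hrs⟩ := hr
      have hsub : ball (x,t) r \ {p : X × ℝ | p.2 < f p.1}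
          ⊆ (ball x r ∩ {y | (f y : EReal) < s}) ×ˢ ball t r := by
        rintro ⟨y, u⟩ ⟨hb, hg⟩
        rw [← ball_prod_same] at hb
        obtain ⟨hy, hu⟩ := hb
        simp only [Set.mem_setOf_eq, not_lt] at hg
        refine ⟨⟨hy, ?_⟩, hu⟩
        have : u < t + r := by
          have := abs_lt.mp (mem_ball_iff_norm.mp hu)
          linarith [this.2]
        have hfy : f y < s' := by linarith [hg]
        exact lt_trans (by exact_mod_cast hfy) hs's
      have hnum : (μ.prod volume) (ball (x,t) r \ {p : X × ℝ | p.2 < f p.1})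
          ≤ μ (ball x r ∩ {y | (f y : EReal) < s}) * ENNReal.ofReal (2 * r) := by
        calc (μ.prod volume) (ball (x,t) r \ {p : X × ℝ | p.2 < f p.1})
            ≤ (μ.prod volume) ((ball x r ∩ {y | (f y : EReal) < s}) ×ˢ ball t r) :=
              measure_mono hsub
          _ = μ (ball x r ∩ {y | (f y : EReal) < s}) * volume (ball t r) :=
              Measure.prod_prod _ _
          _ = _ := by rw [Real.volume_ball]
      have hden : (μ.prod volume) (ball (x,t) r) = μ (ball x r) * ENNReal.ofReal (2 * r) := by
        rw [← ball_prod_same, Measure.prod_prod, Real.volume_ball]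
      rw [hden]
      refine le_trans (ENNReal.div_le_div_right hnum _) (le_of_eq ?_)
      exact ENNReal.mul_div_mul_right _ _ (by simp [hr0, mul_pos]) ENNReal.ofReal_ne_top
    have hle : Filter.limsup
        (fun r => (μ.prod volume) (ball (x,t) r \ {p : X × ℝ | p.2 < f p.1})
          / (μ.prod volume) (ball (x,t) r)) (nhdsWithin (0:ℝ) (Set.Ioi 0)) ≤ 0 := by
      calc _ ≤ Filter.limsup (fun r => μ (ball x r ∩ {y | (f y : EReal) < s}) / μ (ball x r))
              (nhdsWithin (0:ℝ) (Set.Ioi 0)) := Filter.limsup_le_limsup hev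
        _ = 0 := hsmem.limsup_eq
    exact absurd h.2 (by simpa using hle)
  · by_contra hlt
    push_neg at hlt
    obtain ⟨s, hsmem, hts⟩ := sInf_lt_iff.mp hlt
    obtain ⟨s', hss', hs't⟩ := EReal.exists_between_coe_real hts
    have hts'' : s' < t := by exact_mod_cast hs't
    have hev : ∀ᶠ r in nhdsWithin (0:ℝ) (Set.Ioi 0),
        (μ.prod volume) (ball (x,t) r ∩ {p : X × ℝ | p.2 < f p.1}) / (μ.prod volume) (ball (x,t) r)
          ≤ μ (ball x r ∩ {y | s < (f y : EReal)}) / μ (ball x r) := by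
      filter_upwards [Ioo_mem_nhdsGT_of_mem (Set.mem_Ico.mpr ⟨le_refl (0:ℝ), sub_pos.mpr hts''⟩)]
        with r hr
      obtain ⟨hr0, hrs⟩ := hr
      have hsub : ball (x,t) r ∩ {p : X × ℝ | p.2 < f p.1}
          ⊆ (ball x r ∩ {y | s < (f y : EReal)}) ×ˢ ball t r := by
        rintro ⟨y, u⟩ ⟨hb, hg⟩
        rw [← ball_prod_same] at hb
        obtain ⟨hy, hu⟩ := hb
        simp only [Set.mem_setOf_eq] at hg
        refine ⟨⟨hy, ?_⟩, hu⟩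
        have : t - r < u := by
          have := abs_lt.mp (mem_ball_iff_norm.mp hu)
          linarith [this.1]
        have hfy : s' < f y := by linarith [hg]
        exact lt_trans hss' (by exact_mod_cast hfy)
      have hnum : (μ.prod volume) (ball (x,t) r ∩ {p : X × ℝ | p.2 < f p.1})
          ≤ μ (ball x r ∩ {y | s < (f y : EReal)}) * ENNReal.ofReal (2 * r) := by
        calc (μ.prod volume) (ball (x,t) r ∩ {p : X × ℝ | p.2 < f p.1})
            ≤ (μ.prod volume) ((ball x r ∩ {y | s < (f y : EReal)}) ×ˢ ball t r) :=
              measure_mono hsub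
          _ = μ (ball x r ∩ {y | s < (f y : EReal)}) * volume (ball t r) :=
              Measure.prod_prod _ _
          _ = _ := by rw [Real.volume_ball]
      have hden : (μ.prod volume) (ball (x,t) r) = μ (ball x r) * ENNReal.ofReal (2 * r) := by
        rw [← ball_prod_same, Measure.prod_prod, Real.volume_ball]
      rw [hden]
      refine le_trans (ENNReal.div_le_div_right hnum _) (le_of_eq ?_)
      exact ENNReal.mul_div_mul_right _ _ (by simp [hr0, mul_pos]) ENNReal.ofReal_ne_top
    have hle : Filter.limsup
        (fun r => (μ.prod volume) (ball (x,t) r ∩ {p : X × ℝ | p.2 < f p.1})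
          / (μ.prod volume) (ball (x,t) r)) (nhdsWithin (0:ℝ) (Set.Ioi 0)) ≤ 0 := by
      calc _ ≤ Filter.limsup (fun r => μ (ball x r ∩ {y | s < (f y : EReal)}) / μ (ball x r))
              (nhdsWithin (0:ℝ) (Set.Ioi 0)) := Filter.limsup_le_limsup hev
        _ = 0 := hsmem.limsup_eq
    exact absurd h.1 (by simpa using hle)
end

section
/- Let (X, d, m) be a uniformly locally doubling metric measure space, f ∈ BV_loc(X), and G_f = {(x,t) ∈ X × ℝ : t < f(x)}. If f^∧(x) < t < f^∨(x), then (x, t) belongs to the essential boundary ∂*G_f of the subgraph in X × ℝ (with product metric and measure m ⊗ L^1). -/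
open MeasureTheory Metric Filter
open scoped ENNReal NNReal

open Set
open scoped Topology

/-!
Pick reals `s < t < s'` with `f^∧(x) < s` and `s' < f^∨(x)`. By the definition of `f^∨` as an
infimum, `{f > s'}` does not have density zero at `x`; on the cylinder
`(B(x, r) ∩ {f > s'}) × B(t, r)` with `r ≤ s' - t` one lies below the graph, so the subgraph
has positive upper density at `(x, t)`, the factor `L¹(B(t, r)) = 2r` cancelling in the ratio.
Symmetrically `{f < s}` and `r ≤ t - s` give positive upper density of the complement.
-/

theorem Filter.limsup_pos_of_not_tendsto_zero {α : Type*} {l : Filter α} {φ : α → ℝ≥0∞}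
    (h : ¬Tendsto φ l (𝓝 0)) : 0 < limsup φ l :=
  pos_iff_ne_zero.2 fun h0 => h (tendsto_of_le_liminf_of_limsup_le zero_le h0.le)

theorem MeasureTheory.Measure.div_le_prod_inter_div {α β : Type*} [MeasurableSpace α]
    [MeasurableSpace β] (μ : Measure α) (ν : Measure β) [SFinite ν] {a b : Set α} {c : Set β}
    {E : Set (α × β)} (hc₀ : ν c ≠ 0) (hc : ν c ≠ ∞) (hE : (b ∩ a) ×ˢ c ⊆ E) :
    μ (b ∩ a) / μ b ≤ μ.prod ν (b ×ˢ c ∩ E) / μ.prod ν (b ×ˢ c) := by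
  rw [← ENNReal.mul_div_mul_right _ _ hc₀ hc, ← Measure.prod_prod, ← Measure.prod_prod]
  gcongr
  exact subset_inter (Set.prod_mono inter_subset_left subset_rfl) hE

theorem limsup_prod_density_pos {X Y : Type*} [MetricSpace X] [MeasurableSpace X]
    [MetricSpace Y] [MeasurableSpace Y] [ProperSpace Y] (μ : Measure X) (ν : Measure Y)
    [SFinite ν] [ν.IsOpenPosMeasure] [IsFiniteMeasureOnCompacts ν]
    {x : X} {y : Y} {A : Set X} {E : Set (X × Y)} {δ : ℝ} (hδ : 0 < δ)
    (hE : ∀ r ∈ Ioo 0 δ, (ball x r ∩ A) ×ˢ ball y r ⊆ E)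
    (hA : ¬Tendsto (fun r => μ (ball x r ∩ A) / μ (ball x r)) (𝓝[>] 0) (𝓝 0)) :
    0 < limsup (fun r => μ.prod ν (ball (x, y) r ∩ E) / μ.prod ν (ball (x, y) r)) (𝓝[>] 0) := by
  refine (limsup_pos_of_not_tendsto_zero hA).trans_le (limsup_le_limsup ?_)
  filter_upwards [Ioo_mem_nhdsGT hδ] with r hr
  rw [← ball_prod_same]
  exact Measure.div_le_prod_inter_div μ ν (measure_ball_pos ν y hr.1).ne'
    measure_ball_lt_top.ne (hE r hr)

section ApproximateLimits

variable {X : Type*} [MetricSpace X] [MeasurableSpace X] {μ : Measure X} {f : X → ℝ} {x : X}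
  {s : ℝ}

theorem not_tendsto_density_superlevel_of_lt_apUpper (hs : (s : EReal) < apUpper μ f x) :
    ¬Tendsto (fun r => μ (ball x r ∩ {y | s < f y}) / μ (ball x r)) (𝓝[>] 0) (𝓝 0) := by
  intro h
  refine (sInf_le ?_).not_gt hs
  simpa only [mem_ofPred_eq, EReal.coe_lt_coe_iff] using h

theorem not_tendsto_density_sublevel_of_apLower_lt (hs : apLower μ f x < s) :
    ¬Tendsto (fun r => μ (ball x r ∩ {y | f y < s}) / μ (ball x r)) (𝓝[>] 0) (𝓝 0) := by
  intro h
  refine (le_sSup ?_).not_gt hs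
  simpa only [mem_ofPred_eq, EReal.coe_lt_coe_iff] using h

end ApproximateLimits

section Subgraph

variable {X : Type*} {f : X → ℝ} {A : Set X} {s t r : ℝ}

theorem prod_ball_subset_subgraph (hr : r ≤ s - t) :
    (A ∩ {y | s < f y}) ×ˢ ball t r ⊆ {p : X × ℝ | p.2 < f p.1} := by
  rintro ⟨y, u⟩ ⟨⟨-, hy : s < f y⟩, hu⟩
  rw [mem_ball, Real.dist_eq, abs_lt] at hu
  exact (show u < s by linarith).trans hy

theorem prod_ball_subset_compl_subgraph (hr : r ≤ t - s) :
    (A ∩ {y | f y < s}) ×ˢ ball t r ⊆ {p : X × ℝ | p.2 < f p.1}ᶜ := by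
  rintro ⟨y, u⟩ ⟨⟨-, hy : f y < s⟩, hu⟩
  rw [mem_ball, Real.dist_eq, abs_lt] at hu
  exact not_lt.2 (hy.le.trans (by linarith))

end Subgraph

theorem stmt9_general {X : Type*} [MetricSpace X] [MeasurableSpace X]
    (μ : Measure X) (f : X → ℝ) (x : X) (t : ℝ)
    (h1 : apLower μ f x < (t : EReal)) (h2 : (t : EReal) < apUpper μ f x) :
    (x, t) ∈ essBoundary (μ.prod volume) {p : X × ℝ | p.2 < f p.1} := by
  obtain ⟨s, hs, hst⟩ := EReal.exists_between_coe_real h1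
  obtain ⟨s', hts', hs'⟩ := EReal.exists_between_coe_real h2
  rw [EReal.coe_lt_coe_iff] at hst hts'
  refine ⟨limsup_prod_density_pos μ volume (sub_pos.2 hts')
    (fun r hr => prod_ball_subset_subgraph hr.2.le)
    (not_tendsto_density_superlevel_of_lt_apUpper hs'), ?_⟩
  simp only [sdiff_eq]
  exact limsup_prod_density_pos μ volume (sub_pos.2 hst)
    (fun r hr => prod_ball_subset_compl_subgraph hr.2.le)
    (not_tendsto_density_sublevel_of_apLower_lt hs)

/-- Let `(X, d, μ)` be uniformly locally doubling and `f ∈ BV_loc(X)`.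
If `f^∧(x) < t < f^∨(x)`, then `(x,t)` belongs to the essential boundary of the subgraph
`G_f ⊆ X × ℝ` (with the product metric and measure `μ ⊗ L¹`). -/
theorem stmt9 {X : Type*} [MetricSpace X] [MeasurableSpace X] [BorelSpace X]
    (μ : Measure X) [SigmaFinite μ] (hμ : UnifLocDoubling μ)
    (f : X → ℝ) (hf : BVlocM μ f) (x : X) (t : ℝ)
    (h1 : apLower μ f x < (t : EReal)) (h2 : (t : EReal) < apUpper μ f x) :
    (x, t) ∈ essBoundary (μ.prod volume) {p : X × ℝ | p.2 < f p.1} :=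
  stmt9_general μ f x t h1 h2
end

section
/- Let (X, d) be a metric space, E ⊆ X with H^{n-1} σ-finite on E. If N ⊆ E satisfies H^{n-1}(N) = 0, then H^n(N × ℝ) = 0 in the product metric space X × ℝ. -/
/-!
Cover `N` by sets `tᵢ` of small diameter with `∑ diam (tᵢ) ^ (n - 1)` small. Cutting each slab
`tᵢ × [a, a + 1]` into about `1 / δᵢ` pieces of height `δᵢ ≥ diam tᵢ` gives pieces of diameter
`δᵢ` whose `n`-th powers sum to at most `2 δᵢ ^ (n - 1)`, so `μH[n]` of every slab `N × [a, a + 1]`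
vanishes, and `N × ℝ` is a countable union of such slabs. When `n - 1 ≤ 0`, a `μH[n - 1]`-null
set is empty.
-/

open MeasureTheory Set Filter ENNReal Metric Topology

theorem Metric.ediam_prod_le {X Y : Type*} [PseudoEMetricSpace X] [PseudoEMetricSpace Y]
    (s : Set X) (t : Set Y) : ediam (s ×ˢ t) ≤ max (ediam s) (ediam t) :=
  ediam_le fun p hp q hq => by
    rw [Prod.edist_eq]
    exact max_le_max (edist_le_ediam_of_mem hp.1 hq.1) (edist_le_ediam_of_mem hp.2 hq.2)

theorem exists_cover_prod_Icc_of_ediam_le {X : Type*} [PseudoEMetricSpace X] {t : Set X}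
    {δ : ℝ≥0∞} (hδ0 : δ ≠ 0) (hδ1 : δ ≤ 1) (ht : ediam t ≤ δ) (a : ℝ) {d : ℝ} (hd : 0 ≤ d) :
    ∃ u : ℕ → Set (X × ℝ), t ×ˢ Icc a (a + 1) ⊆ ⋃ j, u j ∧ (∀ j, ediam (u j) ≤ δ) ∧
      ∑' j, ediam (u j) ^ (d + 1) ≤ 2 * δ ^ d := by
  have hδtop : δ ≠ ∞ := ne_top_of_le_ne_top one_ne_top hδ1
  set δ' := δ.toReal
  have hδ' : 0 < δ' := ENNReal.toReal_pos hδ0 hδtop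
  set u : ℕ → Set (X × ℝ) := fun j => t ×ˢ (Icc a (a + 1) ∩ Icc (a + j * δ') (a + (j + 1) * δ'))
  have hdiam : ∀ j, ediam (u j) ≤ δ := fun j => by
    refine (ediam_prod_le _ _).trans (max_le ht ?_)
    calc ediam (Icc a (a + 1) ∩ Icc (a + j * δ') (a + (j + 1) * δ'))
        ≤ ediam (Icc (a + j * δ') (a + (j + 1) * δ')) := ediam_mono inter_subset_right
      _ = δ := by rw [Real.ediam_Icc, show a + (j + 1) * δ' - (a + j * δ') = δ' by ring,
          ofReal_toReal hδtop]
  refine ⟨u, ?cover, hdiam, ?sum⟩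
  case cover =>
    rintro ⟨x, y⟩ ⟨hx, hy⟩
    have hya : 0 ≤ (y - a) / δ' := div_nonneg (by linarith [hy.1]) hδ'.le
    refine mem_iUnion.2 ⟨⌊(y - a) / δ'⌋₊, hx, hy, ?_, ?_⟩
    · linarith [(le_div_iff₀ hδ').1 (Nat.floor_le hya)]
    · linarith [(div_lt_iff₀ hδ').1 (Nat.lt_floor_add_one ((y - a) / δ'))]
  case sum =>
    set M := ⌊δ'⁻¹⌋₊
    have hvanish : ∀ j ∉ Finset.range (M + 1), ediam (u j) ^ (d + 1) = 0 := by
      intro j hj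
      have hj : 1 < j * δ' := by
        rw [Finset.mem_range, not_lt, Nat.succ_le_iff, Nat.floor_lt (inv_nonneg.2 hδ'.le),
          inv_lt_iff_one_lt_mul₀ hδ'] at hj
        linarith
      have : u j = ∅ := by
        refine prod_eq_empty_iff.2 (Or.inr (eq_empty_of_forall_notMem fun y hy => ?_))
        linarith [hy.1.2, hy.2.1]
      simp [this, ENNReal.zero_rpow_of_pos (by linarith : 0 < d + 1)]
    have hM : (M : ℝ≥0∞) + 1 ≤ 2 * δ⁻¹ := by
      have hMδ : (M : ℝ≥0∞) ≤ δ⁻¹ := by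
        rw [← ofReal_toReal hδtop, ← ofReal_inv_of_pos hδ', ← ofReal_natCast]
        exact ofReal_le_ofReal (Nat.floor_le (inv_nonneg.2 hδ'.le))
      rw [two_mul]
      exact add_le_add hMδ (ENNReal.one_le_inv.2 hδ1)
    calc ∑' j, ediam (u j) ^ (d + 1)
        = ∑ j ∈ Finset.range (M + 1), ediam (u j) ^ (d + 1) := tsum_eq_sum hvanish
      _ ≤ ∑ j ∈ Finset.range (M + 1), δ ^ (d + 1) :=
          Finset.sum_le_sum fun j _ => rpow_le_rpow (hdiam j) (by linarith)
      _ = (M + 1) * (δ ^ d * δ) := by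
          rw [Finset.sum_const, Finset.card_range, nsmul_eq_mul, rpow_add d 1 hδ0 hδtop,
            rpow_one]; push_cast; ring
      _ ≤ 2 * δ⁻¹ * (δ ^ d * δ) := by gcongr
      _ = 2 * δ ^ d := by
          rw [mul_comm (δ ^ d), ← mul_assoc, mul_assoc 2, ENNReal.inv_mul_cancel hδ0 hδtop,
            mul_one]

section Hausdorff

variable {X : Type*} [EMetricSpace X] [MeasurableSpace X] [BorelSpace X]

theorem eq_empty_of_hausdorffMeasure_eq_zero_of_nonpos {d : ℝ} (hd : d ≤ 0) {s : Set X}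
    (h : μH[d] s = 0) : s = ∅ := by
  by_contra hs
  have h0 : μH[0] s = 0 := le_antisymm (h ▸ Measure.hausdorffMeasure_mono hd s) zero_le
  simpa [h0] using Measure.one_le_hausdorffMeasure_zero_of_nonempty (nonempty_iff_ne_empty.2 hs)

theorem exists_cover_of_hausdorffMeasure_eq_zero {d : ℝ} (hd : 0 < d) {s : Set X}
    (h : μH[d] s = 0) {r ε : ℝ≥0∞} (hr : 0 < r) (hε : 0 < ε) :
    ∃ t : ℕ → Set X, s ⊆ ⋃ i, t i ∧ (∀ i, ediam (t i) ≤ r) ∧ ∑' i, ediam (t i) ^ d < ε := by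
  rw [Measure.hausdorffMeasure_apply, ENNReal.iSup_eq_zero] at h
  obtain ⟨t, hst, htr, hsum⟩ : ∃ t : ℕ → Set X, s ⊆ ⋃ i, t i ∧ (∀ i, ediam (t i) ≤ r) ∧
      ∑' i, ⨆ _ : (t i).Nonempty, ediam (t i) ^ d < ε := by
    have := (ENNReal.iSup_eq_zero.1 (h r)) hr ▸ hε
    simpa only [iInf_lt_iff, exists_prop] using this
  refine ⟨t, hst, htr, lt_of_eq_of_lt (tsum_congr fun i => ?_) hsum⟩
  rcases (t i).eq_empty_or_nonempty with hti | hti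
  · simp [hti, ENNReal.zero_rpow_of_pos hd]
  · rw [iSup_pos hti]

theorem exists_cover_prod_Icc_of_hausdorffMeasure_eq_zero {d : ℝ} (hd : 0 < d) {s : Set X}
    (h : μH[d] s = 0) (a : ℝ) {r : ℝ≥0∞} (hr0 : 0 < r) (hr1 : r ≤ 1) :
    ∃ u : ℕ × ℕ → Set (X × ℝ), s ×ˢ Icc a (a + 1) ⊆ ⋃ p, u p ∧ (∀ p, ediam (u p) ≤ r) ∧
      ∑' p, ediam (u p) ^ (d + 1) ≤ 4 * r ^ d := by
  have hrd : 0 < r ^ d := rpow_pos hr0 (ne_top_of_le_ne_top one_ne_top hr1)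
  obtain ⟨t, hst, htr, htsum⟩ := exists_cover_of_hausdorffMeasure_eq_zero hd h hr0 hrd
  obtain ⟨ε, hε0, hεsum⟩ := exists_pos_sum_of_countable hrd.ne' ℕ
  -- Enlarging the diameters to `δ i > 0` lets each slab `t i ×ˢ Icc a (a + 1)` be cut into
  -- pieces of height `δ i`; the excess `(ε i) ^ d⁻¹` costs at most `ε i` in the `d`-th power.
  set δ : ℕ → ℝ≥0∞ := fun i => max (ediam (t i)) ((ε i : ℝ≥0∞) ^ d⁻¹)
  have hδ0 : ∀ i, δ i ≠ 0 := fun i =>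
    ((rpow_pos (coe_pos.2 (hε0 i)) coe_ne_top).trans_le (le_max_right _ _)).ne'
  have hδr : ∀ i, δ i ≤ r := fun i => by
    refine max_le (htr i) ?_
    calc (ε i : ℝ≥0∞) ^ d⁻¹ ≤ (r ^ d) ^ d⁻¹ :=
          rpow_le_rpow ((ENNReal.le_tsum i).trans hεsum.le) (inv_nonneg.2 hd.le)
      _ = r := rpow_rpow_inv hd.ne' r
  have hδd : ∀ i, δ i ^ d ≤ ediam (t i) ^ d + ε i := fun i => by
    rw [max_rpow hd.le, rpow_inv_rpow hd.ne']
    exact max_le le_self_add le_add_self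
  choose u hu using fun i =>
    exists_cover_prod_Icc_of_ediam_le (hδ0 i) ((hδr i).trans hr1) (le_max_left _ _) a hd.le
  refine ⟨fun p => u p.1 p.2, ?_, fun p => ((hu p.1).2.1 p.2).trans (hδr p.1), ?_⟩
  · rintro ⟨x, y⟩ ⟨hx, hy⟩
    obtain ⟨i, hi⟩ := mem_iUnion.1 (hst hx)
    obtain ⟨j, hj⟩ := mem_iUnion.1 ((hu i).1 ⟨hi, hy⟩)
    exact mem_iUnion.2 ⟨(i, j), hj⟩
  calc ∑' p : ℕ × ℕ, ediam (u p.1 p.2) ^ (d + 1)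
      = ∑' i, ∑' j, ediam (u i j) ^ (d + 1) :=
        ENNReal.tsum_prod (f := fun i j => ediam (u i j) ^ (d + 1))
    _ ≤ ∑' i, 2 * (ediam (t i) ^ d + ε i) :=
        ENNReal.tsum_le_tsum fun i => (hu i).2.2.trans (by gcongr; exact hδd i)
    _ = 2 * (∑' i, ediam (t i) ^ d + ∑' i, (ε i : ℝ≥0∞)) := by
        rw [ENNReal.tsum_mul_left, ENNReal.tsum_add]
    _ ≤ 2 * (r ^ d + r ^ d) := by gcongr
    _ = 4 * r ^ d := by ring

theorem hausdorffMeasure_prod_Icc_eq_zero {d : ℝ} (hd : 0 < d) {s : Set X} (h : μH[d] s = 0)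
    (a : ℝ) : (μH[d + 1] : Measure (X × ℝ)) (s ×ˢ Icc a (a + 1)) = 0 := by
  set r : ℕ → ℝ≥0∞ := fun k => 2⁻¹ ^ k
  have hr : Tendsto r atTop (𝓝 0) :=
    ENNReal.tendsto_pow_atTop_nhds_zero_of_lt_one (ENNReal.inv_lt_one.2 one_lt_two)
  choose u hu using fun k => exists_cover_prod_Icc_of_hausdorffMeasure_eq_zero hd h a
    (r := r k) (ENNReal.pow_pos (by simp) k) (pow_le_one' (by simp) k)
  have hlim : Tendsto (fun k => 4 * r k ^ d) atTop (𝓝 0) := by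
    simpa [ENNReal.zero_rpow_of_pos hd] using
      ENNReal.Tendsto.const_mul (((ENNReal.continuous_rpow_const (y := d)).tendsto 0).comp hr)
        (Or.inr (ofNat_ne_top (n := 4)))
  refine le_antisymm ?_ zero_le
  calc (μH[d + 1] : Measure (X × ℝ)) (s ×ˢ Icc a (a + 1))
      ≤ liminf (fun k => ∑' p, ediam (u k p) ^ (d + 1)) atTop :=
        Measure.hausdorffMeasure_le_liminf_tsum _ _ r hr u
          (Eventually.of_forall fun k => (hu k).2.1) (Eventually.of_forall fun k => (hu k).1)
    _ ≤ liminf (fun k => 4 * r k ^ d) atTop :=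
        liminf_le_liminf (Eventually.of_forall fun k => (hu k).2.2)
    _ = 0 := hlim.liminf_eq

theorem hausdorffMeasure_prod_univ_eq_zero {d : ℝ} {s : Set X} (h : μH[d] s = 0) :
    (μH[d + 1] : Measure (X × ℝ)) (s ×ˢ univ) = 0 := by
  rcases le_or_gt d 0 with hd | hd
  · simp [eq_empty_of_hausdorffMeasure_eq_zero_of_nonpos hd h]
  refine measure_mono_null (fun p hp => ?_)
    (measure_iUnion_null fun k : ℤ => hausdorffMeasure_prod_Icc_eq_zero hd h k)
  exact mem_iUnion.2 ⟨⌊p.2⌋, hp.1, Int.floor_le p.2, (Int.lt_floor_add_one p.2).le⟩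

end Hausdorff

theorem stmt19_general {X : Type*} [MetricSpace X] [MeasurableSpace X] [BorelSpace X]
    (n : ℕ) (N : Set X) (hN : μH[(n : ℝ) - 1] N = 0) :
    (μH[(n : ℝ)] : Measure (X × ℝ)) (N ×ˢ (Set.univ : Set ℝ)) = 0 := by
  simpa only [sub_add_cancel] using hausdorffMeasure_prod_univ_eq_zero hN

/-- Let `(X, d)` be a metric space and `E ⊆ X` a set on which the
`(n-1)`-dimensional Hausdorff measure is σ-finite. If `N ⊆ E` is `H^{n-1}`-null, then
`N × ℝ` is `H^n`-null in the product metric space `X × ℝ` (sup-product metric). -/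
theorem stmt19 {X : Type*} [MetricSpace X] [MeasurableSpace X] [BorelSpace X]
    (n : ℕ) (E N : Set X)
    (hsf : SigmaFinite ((μH[(n : ℝ) - 1] : Measure X).restrict E))
    (hNE : N ⊆ E) (hN : μH[(n : ℝ) - 1] N = 0) :
    (μH[(n : ℝ)] : Measure (X × ℝ)) (N ×ˢ (Set.univ : Set ℝ)) = 0 :=
  stmt19_general n N hN
end
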